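/- Let α > 0, N ≥ 0 an integer, and f ∈ C¹(ℝ) with f(0) = 0. Then for every u ∈ R_N, ∫_ℝ ∂_x(P_{N+1}(f∘u))(x) u(x) dx = ∫_ℝ f'(u(x)) u(x) u'(x) dx; in particular the truncation of the flux in the spectral scheme does not contribute to the energy balance beyond the exact flux term. -/

import Mathlib

open MeasureTheory Real

/-- Physicists' Hermite polynomial: `ℋ_n(x) = (−1)^n e^{x²} (dⁿ/dxⁿ) e^{−x²}`. -/
noncomputable def physHermite (n : ℕ) : ℝ → ℝ :=
  fun x => (-1 : ℝ) ^ n * Real.exp (x ^ 2) * iteratedDeriv n (fun y => Real.exp (-(y ^ 2))) x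

/-- Generalized Hermite function `H_n^α(x) = (α/(2^n n! √π))^{1/2} ℋ_n(αx) e^{−α²x²/2}`. -/
noncomputable def genHermite (α : ℝ) (n : ℕ) : ℝ → ℝ :=
  fun x => Real.sqrt (α / (2 ^ n * n.factorial * Real.sqrt Real.pi)) *
    physHermite n (α * x) * Real.exp (-(α ^ 2 * x ^ 2) / 2)

/-- Integer-indexed generalized Hermite function, with the convention `H_n^α ≡ 0` for `n < 0`. -/
noncomputable def genHermiteZ (α : ℝ) (n : ℤ) : ℝ → ℝ :=
  fun x => if 0 ≤ n then genHermite α n.toNat x else 0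

/-- The operator `D_x = ∂_x + α² x`. -/
noncomputable def Dx (α : ℝ) (u : ℝ → ℝ) : ℝ → ℝ :=
  fun x => deriv u x + α ^ 2 * x * u x

/-- The Sturm–Liouville operator
`L_α(u)(x) = −e^{α²x²/2} ∂_x(e^{−α²x²} ∂_x(e^{α²x²/2} u(x)))`. -/
noncomputable def SLop (α : ℝ) (u : ℝ → ℝ) : ℝ → ℝ :=
  fun x => -(Real.exp (α ^ 2 * x ^ 2 / 2) *
    deriv (fun y => Real.exp (-(α ^ 2 * y ^ 2)) *
      deriv (fun z => Real.exp (α ^ 2 * z ^ 2 / 2) * u z) y) x)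

/-! The truncated flux `P_{N+1}(f ∘ u)` lies in `R_{N+1}`, and `∂ₓ` is skew-adjoint between
Hermite expansions, so `∫ ∂ₓ(P_{N+1}(f ∘ u)) u = -∫ P_{N+1}(f ∘ u) ∂ₓu`. The recurrence
`∂ₓH_n = α (√(n/2) H_{n-1} - √((n+1)/2) H_{n+1})` puts `∂ₓu` in `R_{N+1}`, against which the
orthogonal projection `P_{N+1}` is invisible; this leaves `-∫ f(u) ∂ₓu`, and one integration by
parts turns it into `∫ f'(u) u ∂ₓu`. -/

open Polynomial

noncomputable def physHermitePoly : ℕ → ℝ[X]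
  | 0 => 1
  | n + 1 => 2 * X * physHermitePoly n - derivative (physHermitePoly n)

lemma physHermitePoly_succ (n : ℕ) :
    physHermitePoly (n + 1) = 2 * X * physHermitePoly n - derivative (physHermitePoly n) :=
  rfl

lemma derivative_physHermitePoly_succ (n : ℕ) :
    derivative (physHermitePoly (n + 1)) = C (2 * (n + 1) : ℝ) * physHermitePoly n := by
  induction n with
  | zero => simp [physHermitePoly, C_ofNat]
  | succ n ih =>
    rw [physHermitePoly_succ (n + 1), derivative_sub, derivative_mul, ih, derivative_C_mul,
      physHermitePoly_succ n]
    simp only [derivative_mul, derivative_ofNat, derivative_X, map_mul, map_add, map_natCast,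
      map_ofNat, C_1, Nat.cast_add, Nat.cast_one]
    ring

lemma derivative_physHermitePoly (n : ℕ) :
    derivative (physHermitePoly n) = C (2 * n : ℝ) * physHermitePoly (n - 1) := by
  cases n with
  | zero => simp [physHermitePoly]
  | succ n => simp [derivative_physHermitePoly_succ]

lemma eval_physHermitePoly_succ (n : ℕ) (y : ℝ) :
    (physHermitePoly (n + 1)).eval y
      = 2 * y * (physHermitePoly n).eval y - 2 * n * (physHermitePoly (n - 1)).eval y := by
  simp [physHermitePoly_succ, derivative_physHermitePoly, mul_assoc]

lemma iterate_derivative_physHermitePoly_self (n : ℕ) :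
    derivative^[n] (physHermitePoly n) = C ((2 : ℝ) ^ n * n.factorial) := by
  induction n with
  | zero => simp [physHermitePoly]
  | succ n ih =>
    rw [Function.iterate_succ_apply, derivative_physHermitePoly_succ,
      iterate_derivative_C_mul, ih, ← C_mul]
    push_cast [Nat.factorial_succ]
    ring_nf

lemma iterate_derivative_physHermitePoly_of_lt {n m : ℕ} (h : n < m) :
    derivative^[m] (physHermitePoly n) = 0 := by
  obtain ⟨k, rfl⟩ : ∃ k, m = k + 1 + n := ⟨m - n - 1, by omega⟩
  rw [Function.iterate_add_apply, Function.iterate_succ_apply,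
    iterate_derivative_physHermitePoly_self, derivative_C, iterate_derivative_zero]

lemma hasDerivAt_eval_mul_exp_neg_sq (P : ℝ[X]) (x : ℝ) :
    HasDerivAt (fun y => P.eval y * exp (-(y ^ 2)))
      ((derivative P).eval x * exp (-(x ^ 2)) + P.eval x * (-(2 * x) * exp (-(x ^ 2)))) x := by
  have h : HasDerivAt (fun y : ℝ => -(y ^ 2)) (-(2 * x)) x := by
    simpa using (hasDerivAt_pow 2 x).fun_neg
  exact (P.hasDerivAt x).mul h.exp |>.congr_deriv (by ring)

lemma iteratedDeriv_exp_neg_sq (n : ℕ) :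
    iteratedDeriv n (fun y => exp (-(y ^ 2)))
      = fun x => (-1) ^ n * (physHermitePoly n).eval x * exp (-(x ^ 2)) := by
  induction n with
  | zero => simp [physHermitePoly]
  | succ n ih =>
    ext x
    rw [iteratedDeriv_succ, ih]
    have h := (hasDerivAt_eval_mul_exp_neg_sq (physHermitePoly n) x).const_mul ((-1 : ℝ) ^ n)
    simp only [← mul_assoc] at h
    rw [h.deriv, physHermitePoly_succ]
    simp only [eval_sub, eval_mul, eval_ofNat, eval_X]
    ring

lemma physHermite_eq_eval (n : ℕ) (x : ℝ) : physHermite n x = (physHermitePoly n).eval x := by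
  have h : (-1 : ℝ) ^ n * (-1) ^ n * (exp (x ^ 2) * exp (-(x ^ 2))) = 1 := by
    rw [← mul_pow, ← exp_add]; simp
  rw [physHermite, iteratedDeriv_exp_neg_sq]
  linear_combination (physHermitePoly n).eval x * h

lemma abs_pow_mul_exp_neg_mul_sq_le {b : ℝ} (hb : 0 < b) (n : ℕ) (x : ℝ) :
    |x| ^ n * exp (-(b * x ^ 2)) ≤ √(n.factorial / b ^ n) * exp (-(b / 2) * x ^ 2) := by
  have hpow : (b * x ^ 2) ^ n ≤ n.factorial * exp (b * x ^ 2) := by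
    have := pow_div_factorial_le_exp (x := b * x ^ 2) (by positivity) n
    rwa [div_le_iff₀ (by positivity), mul_comm (exp _)] at this
  have hsq : (|x| ^ n * exp (-(b / 2) * x ^ 2)) ^ 2 ≤ n.factorial / b ^ n := by
    rw [le_div_iff₀ (by positivity)]
    calc (|x| ^ n * exp (-(b / 2) * x ^ 2)) ^ 2 * b ^ n
        = (b * x ^ 2) ^ n * exp (-(b * x ^ 2)) := by
          rw [mul_pow, ← pow_mul, mul_comm n 2, pow_mul, sq_abs, sq (exp _), ← exp_add, mul_pow]
          ring_nf
      _ ≤ n.factorial * exp (b * x ^ 2) * exp (-(b * x ^ 2)) := by gcongr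
      _ = n.factorial := by rw [mul_assoc, ← exp_add]; simp
  calc |x| ^ n * exp (-(b * x ^ 2))
      = |x| ^ n * exp (-(b / 2) * x ^ 2) * exp (-(b / 2) * x ^ 2) := by
        rw [mul_assoc, ← exp_add]; ring_nf
    _ ≤ √(n.factorial / b ^ n) * exp (-(b / 2) * x ^ 2) := by
        gcongr
        exact Real.le_sqrt_of_sq_le hsq

lemma exists_abs_eval_mul_exp_neg_mul_sq_le {b : ℝ} (hb : 0 < b) (P : ℝ[X]) :
    ∃ C, ∀ x, |P.eval x * exp (-(b * x ^ 2))| ≤ C * exp (-(b / 2) * x ^ 2) := by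
  refine ⟨∑ i ∈ Finset.range (P.natDegree + 1), |P.coeff i| * √(i.factorial / b ^ i),
    fun x => ?_⟩
  rw [eval_eq_sum_range, Finset.sum_mul, Finset.sum_mul]
  refine (Finset.abs_sum_le_sum_abs _ _).trans (Finset.sum_le_sum fun i _ => ?_)
  rw [abs_mul, abs_mul, abs_pow, abs_of_pos (exp_pos _), mul_assoc, mul_assoc]
  exact mul_le_mul_of_nonneg_left (abs_pow_mul_exp_neg_mul_sq_le hb i x) (abs_nonneg _)

lemma integrable_eval_mul_exp_neg_mul_sq {b : ℝ} (hb : 0 < b) (P : ℝ[X]) :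
    Integrable fun x => P.eval x * exp (-(b * x ^ 2)) := by
  obtain ⟨C, hC⟩ := exists_abs_eval_mul_exp_neg_mul_sq_le hb P
  exact ((integrable_exp_neg_mul_sq (half_pos hb)).const_mul C).mono'
    (by fun_prop : Continuous _).aestronglyMeasurable (ae_of_all _ hC)

lemma exists_abs_eval_mul_exp_neg_mul_sq_le_const {b : ℝ} (hb : 0 < b) (P : ℝ[X]) :
    ∃ C, ∀ x, |P.eval x * exp (-(b * x ^ 2))| ≤ C := by
  obtain ⟨C, hC⟩ := exists_abs_eval_mul_exp_neg_mul_sq_le hb P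
  refine ⟨|C|, fun x => (hC x).trans ?_⟩
  calc C * exp (-(b / 2) * x ^ 2) ≤ |C| * exp (-(b / 2) * x ^ 2) := by gcongr; exact le_abs_self C
    _ ≤ |C| := mul_le_of_le_one_right (abs_nonneg C) (exp_le_one_iff.2 (by nlinarith [sq_nonneg x]))

lemma integrable_eval_mul_iteratedDeriv_exp_neg_sq (P : ℝ[X]) (m : ℕ) :
    Integrable fun x => P.eval x * iteratedDeriv m (fun y => exp (-(y ^ 2))) x := by
  have h := (integrable_eval_mul_exp_neg_mul_sq one_pos (C ((-1) ^ m) * P * physHermitePoly m))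
  simp only [one_mul, eval_mul, eval_C] at h
  simp only [iteratedDeriv_exp_neg_sq]
  convert h using 2
  ring

lemma integral_eval_mul_iteratedDeriv_exp_neg_sq (P : ℝ[X]) (m : ℕ) :
    ∫ x, P.eval x * iteratedDeriv m (fun y => exp (-(y ^ 2))) x
      = (-1) ^ m * ∫ x, (derivative^[m] P).eval x * exp (-(x ^ 2)) := by
  induction m generalizing P with
  | zero => simp
  | succ m ih =>
    have hsmooth : ContDiff ℝ ⊤ fun y : ℝ => exp (-(y ^ 2)) := by fun_prop
    have hderiv : ∀ x, HasDerivAt (iteratedDeriv m fun y => exp (-(y ^ 2)))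
        (iteratedDeriv (m + 1) (fun y => exp (-(y ^ 2))) x) x := fun x => by
      rw [iteratedDeriv_succ]
      exact (hsmooth.differentiable_iteratedDeriv m (WithTop.coe_lt_top _) x).hasDerivAt
    rw [integral_mul_deriv_eq_deriv_mul_of_integrable (fun x _ => P.hasDerivAt x)
      (fun x _ => hderiv x) (integrable_eval_mul_iteratedDeriv_exp_neg_sq P (m + 1))
      (integrable_eval_mul_iteratedDeriv_exp_neg_sq _ m)
      (integrable_eval_mul_iteratedDeriv_exp_neg_sq P m), ih, Function.iterate_succ_apply]
    ring

-- Rodrigues' formula `ℋ_m e^{-x²} = (-1)^m ∂ᵐ e^{-x²}`, then `m` integrations by parts.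
lemma integral_physHermitePoly_mul_eq_iterate (n m : ℕ) :
    ∫ x, (physHermitePoly n).eval x * (physHermitePoly m).eval x * exp (-(x ^ 2))
      = ∫ x, (derivative^[m] (physHermitePoly n)).eval x * exp (-(x ^ 2)) := by
  have hsign : (-1 : ℝ) ^ m * (-1) ^ m = 1 := by rw [← mul_pow]; norm_num
  have h := integral_eval_mul_iteratedDeriv_exp_neg_sq (physHermitePoly n) m
  simp only [iteratedDeriv_exp_neg_sq] at h
  calc _ = ∫ x, (-1) ^ m * ((physHermitePoly n).eval x *
          ((-1) ^ m * (physHermitePoly m).eval x * exp (-(x ^ 2)))) := by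
        congr 1 with x
        linear_combination
          -(physHermitePoly n).eval x * (physHermitePoly m).eval x * exp (-(x ^ 2)) * hsign
    _ = _ := by rw [integral_const_mul, h, ← mul_assoc, hsign, one_mul]

lemma integral_physHermitePoly_mul (n m : ℕ) :
    ∫ x, (physHermitePoly n).eval x * (physHermitePoly m).eval x * exp (-(x ^ 2))
      = if n = m then 2 ^ n * n.factorial * √π else 0 := by
  rcases lt_trichotomy n m with h | rfl | h
  · rw [integral_physHermitePoly_mul_eq_iterate, iterate_derivative_physHermitePoly_of_lt h,
      if_neg h.ne]
    simp
  · have hgauss : ∫ x : ℝ, exp (-(x ^ 2)) = √π := by simpa using integral_gaussian 1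
    rw [integral_physHermitePoly_mul_eq_iterate, iterate_derivative_physHermitePoly_self]
    simp [integral_const_mul, hgauss]
  · simp_rw [mul_comm ((physHermitePoly n).eval _) ((physHermitePoly m).eval _)]
    rw [integral_physHermitePoly_mul_eq_iterate, iterate_derivative_physHermitePoly_of_lt h,
      if_neg h.ne']
    simp

noncomputable def genHermiteConst (α : ℝ) (n : ℕ) : ℝ :=
  √(α / (2 ^ n * n.factorial * √π))

lemma genHermite_eq (α : ℝ) (n : ℕ) (x : ℝ) :
    genHermite α n x
      = genHermiteConst α n * (physHermitePoly n).eval (α * x) * exp (-(α ^ 2 / 2 * x ^ 2)) := by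
  rw [genHermite, physHermite_eq_eval, genHermiteConst]
  ring_nf

lemma sqrt_mul_genHermiteConst_succ (α : ℝ) (n : ℕ) :
    √((n + 1) / 2) * genHermiteConst α (n + 1) = genHermiteConst α n / 2 := by
  have hπ : 0 < √π := sqrt_pos.2 pi_pos
  rw [genHermiteConst, genHermiteConst, ← sqrt_mul (by positivity),
    show (2 : ℝ) = √4 by rw [show (4 : ℝ) = 2 ^ 2 by norm_num, sqrt_sq zero_le_two],
    ← sqrt_div' _ (by norm_num : (0 : ℝ) ≤ 4)]
  congr 1
  push_cast [pow_succ, Nat.factorial_succ]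
  field_simp
  ring

lemma natCast_mul_genHermiteConst (α : ℝ) (n : ℕ) :
    n * genHermiteConst α n = √(n / 2) * genHermiteConst α (n - 1) := by
  cases n with
  | zero => simp
  | succ n =>
    have hs : √((n + 1) / 2) * √((n + 1) / 2) = ((n : ℝ) + 1) / 2 := mul_self_sqrt (by positivity)
    push_cast
    linear_combination (2 * √((n + 1) / 2)) * sqrt_mul_genHermiteConst_succ α n
      - 2 * genHermiteConst α (n + 1) * hs

theorem integral_genHermite_mul {α : ℝ} (hα : 0 < α) (n m : ℕ) :
    ∫ x, genHermite α n x * genHermite α m x = if n = m then 1 else 0 := by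
  have hexp : ∀ x, exp (-(α ^ 2 / 2 * x ^ 2)) * exp (-(α ^ 2 / 2 * x ^ 2)) = exp (-((α * x) ^ 2)) :=
    fun x => by rw [← exp_add]; ring_nf
  set g : ℝ → ℝ := fun y =>
    (physHermitePoly n).eval y * (physHermitePoly m).eval y * exp (-(y ^ 2)) with hg
  have hrescale : (fun x => genHermite α n x * genHermite α m x)
      = fun x => genHermiteConst α n * genHermiteConst α m * g (α * x) := funext fun x => by
    simp only [hg, genHermite_eq, ← hexp]; ring
  rw [hrescale, integral_const_mul, Measure.integral_comp_mul_left g α, hg,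
    integral_physHermitePoly_mul, abs_of_pos (inv_pos.2 hα), smul_eq_mul]
  split_ifs with h
  · subst h
    have hπ : 0 < √π := sqrt_pos.2 pi_pos
    rw [genHermiteConst, mul_self_sqrt (by positivity)]
    field_simp
  · simp

lemma hasDerivAt_genHermite (α : ℝ) (n : ℕ) (x : ℝ) :
    HasDerivAt (genHermite α n)
      (α * (√(n / 2) * genHermite α (n - 1) x - √((n + 1) / 2) * genHermite α (n + 1) x)) x := by
  have hpoly : HasDerivAt (fun x => (physHermitePoly n).eval (α * x))
      ((derivative (physHermitePoly n)).eval (α * x) * α) x := by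
    simpa [Function.comp_def] using
      ((physHermitePoly n).hasDerivAt (α * x)).comp x ((hasDerivAt_id x).const_mul α)
  have hgauss : HasDerivAt (fun x => exp (-(α ^ 2 / 2 * x ^ 2)))
      (exp (-(α ^ 2 / 2 * x ^ 2)) * -(α ^ 2 / 2 * (2 * x))) x := by
    simpa using (((hasDerivAt_pow 2 x).const_mul (α ^ 2 / 2)).fun_neg).exp
  have h := (hpoly.const_mul (genHermiteConst α n)).mul hgauss
  simp only [← mul_assoc] at h
  rw [show genHermite α n = fun x => genHermiteConst α n * (physHermitePoly n).eval (α * x) *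
    exp (-(α ^ 2 / 2 * x ^ 2)) from funext (genHermite_eq α n)]
  refine h.congr_deriv ?_
  rw [genHermite_eq, genHermite_eq, derivative_physHermitePoly, eval_mul, eval_C,
    eval_physHermitePoly_succ]
  linear_combination (α * (physHermitePoly (n - 1)).eval (α * x) * exp (-(α ^ 2 / 2 * x ^ 2)))
      * natCast_mul_genHermiteConst α n
    + (α * ((2 * (α * x)) * (physHermitePoly n).eval (α * x)
      - 2 * n * (physHermitePoly (n - 1)).eval (α * x)) * exp (-(α ^ 2 / 2 * x ^ 2)))
      * sqrt_mul_genHermiteConst_succ α n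

def hermiteSpan (α : ℝ) (N : ℕ) : Submodule ℝ (ℝ → ℝ) :=
  Submodule.span ℝ (genHermite α '' Set.Iic N)

section hermiteSpan

variable {α : ℝ} {M N : ℕ} {v w : ℝ → ℝ}

lemma genHermite_mem_hermiteSpan {n : ℕ} (h : n ≤ N) : genHermite α n ∈ hermiteSpan α N :=
  Submodule.subset_span ⟨n, h, rfl⟩

lemma hermiteSpan_mono (h : M ≤ N) : hermiteSpan α M ≤ hermiteSpan α N :=
  Submodule.span_mono (Set.image_mono (Set.Iic_subset_Iic.2 h))

lemma sum_mem_hermiteSpan (α : ℝ) (N : ℕ) (c : ℕ → ℝ) :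
    (fun x => ∑ k ∈ Finset.range (N + 1), c k * genHermite α k x) ∈ hermiteSpan α N := by
  have h : (fun x => ∑ k ∈ Finset.range (N + 1), c k * genHermite α k x)
      = ∑ k ∈ Finset.range (N + 1), c k • genHermite α k := by
    ext x; simp
  rw [h]
  exact Submodule.sum_mem _ fun k hk =>
    Submodule.smul_mem _ _ (genHermite_mem_hermiteSpan (Nat.lt_succ_iff.1 (Finset.mem_range.1 hk)))

lemma exists_polynomial_of_mem_hermiteSpan (hv : v ∈ hermiteSpan α N) :
    ∃ P : ℝ[X], v = fun x => P.eval x * exp (-(α ^ 2 / 2 * x ^ 2)) := by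
  induction hv using Submodule.span_induction with
  | mem _ h =>
    obtain ⟨n, -, rfl⟩ := h
    refine ⟨C (genHermiteConst α n) * (physHermitePoly n).comp (C α * X), funext fun x => ?_⟩
    simp [genHermite_eq]
  | zero => exact ⟨0, funext fun x => by simp⟩
  | add _ _ _ _ hv hw =>
    obtain ⟨P, rfl⟩ := hv
    obtain ⟨Q, rfl⟩ := hw
    exact ⟨P + Q, funext fun x => by simp [add_mul]⟩
  | smul a _ _ hv =>
    obtain ⟨P, rfl⟩ := hv
    exact ⟨C a * P, funext fun x => by simp [mul_assoc]⟩

lemma continuous_of_mem_hermiteSpan (hv : v ∈ hermiteSpan α N) : Continuous v := by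
  obtain ⟨P, rfl⟩ := exists_polynomial_of_mem_hermiteSpan hv
  fun_prop

lemma integrable_of_mem_hermiteSpan (hα : 0 < α) (hv : v ∈ hermiteSpan α N) : Integrable v := by
  obtain ⟨P, rfl⟩ := exists_polynomial_of_mem_hermiteSpan hv
  exact integrable_eval_mul_exp_neg_mul_sq (by positivity) P

lemma exists_bound_of_mem_hermiteSpan (hα : 0 < α) (hv : v ∈ hermiteSpan α N) :
    ∃ C, ∀ x, |v x| ≤ C := by
  obtain ⟨P, rfl⟩ := exists_polynomial_of_mem_hermiteSpan hv
  exact exists_abs_eval_mul_exp_neg_mul_sq_le_const (by positivity) P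

lemma integrable_mul_of_mem_hermiteSpan (hα : 0 < α) (hv : v ∈ hermiteSpan α M)
    (hw : w ∈ hermiteSpan α N) : Integrable fun x => v x * w x := by
  obtain ⟨C, hC⟩ := exists_bound_of_mem_hermiteSpan hα hw
  exact (integrable_of_mem_hermiteSpan hα hv).mul_bdd
    (continuous_of_mem_hermiteSpan hw).aestronglyMeasurable (ae_of_all _ hC)

lemma exists_hasDerivAt_of_mem_hermiteSpan (hv : v ∈ hermiteSpan α N) :
    ∃ v' ∈ hermiteSpan α (N + 1), ∀ x, HasDerivAt v (v' x) x := by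
  induction hv using Submodule.span_induction with
  | mem _ h =>
    obtain ⟨n, hn, rfl⟩ := h
    refine ⟨α • (√(n / 2) • genHermite α (n - 1) - √((n + 1) / 2) • genHermite α (n + 1)),
      ?_, fun x => by simpa using hasDerivAt_genHermite α n x⟩
    have hn : n ≤ N := hn
    exact Submodule.smul_mem _ _ (Submodule.sub_mem _
      (Submodule.smul_mem _ _ (genHermite_mem_hermiteSpan (by omega)))
      (Submodule.smul_mem _ _ (genHermite_mem_hermiteSpan (by omega))))
  | zero => exact ⟨0, Submodule.zero_mem _, fun x => hasDerivAt_const x 0⟩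
  | add _ _ _ _ hv hw =>
    obtain ⟨v', hv'R, hv'⟩ := hv
    obtain ⟨w', hw'R, hw'⟩ := hw
    exact ⟨v' + w', Submodule.add_mem _ hv'R hw'R, fun x => (hv' x).add (hw' x)⟩
  | smul a _ _ hv =>
    obtain ⟨v', hv'R, hv'⟩ := hv
    exact ⟨a • v', Submodule.smul_mem _ a hv'R, fun x => (hv' x).const_smul a⟩

lemma differentiable_of_mem_hermiteSpan (hv : v ∈ hermiteSpan α N) : Differentiable ℝ v := by
  obtain ⟨v', -, hv'⟩ := exists_hasDerivAt_of_mem_hermiteSpan hv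
  exact fun x => (hv' x).differentiableAt

lemma deriv_mem_hermiteSpan (hv : v ∈ hermiteSpan α N) : deriv v ∈ hermiteSpan α (N + 1) := by
  obtain ⟨v', hv'R, hv'⟩ := exists_hasDerivAt_of_mem_hermiteSpan hv
  rwa [show deriv v = v' from funext fun x => (hv' x).deriv]

lemma integral_deriv_mul_eq_neg_integral_mul_deriv (hα : 0 < α) (hv : v ∈ hermiteSpan α M)
    (hw : w ∈ hermiteSpan α N) : ∫ x, deriv v x * w x = -∫ x, v x * deriv w x := by
  rw [integral_mul_deriv_eq_deriv_mul_of_integrable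
    (fun x _ => (differentiable_of_mem_hermiteSpan hv x).hasDerivAt)
    (fun x _ => (differentiable_of_mem_hermiteSpan hw x).hasDerivAt)
    (integrable_mul_of_mem_hermiteSpan hα hv (deriv_mem_hermiteSpan hw))
    (integrable_mul_of_mem_hermiteSpan hα (deriv_mem_hermiteSpan hv) hw)
    (integrable_mul_of_mem_hermiteSpan hα hv hw), neg_neg]

end hermiteSpan

noncomputable def hermiteProj (α : ℝ) (N : ℕ) (g : ℝ → ℝ) : ℝ → ℝ :=
  fun z => ∑ n ∈ Finset.range (N + 1), (∫ y, g y * genHermite α n y) * genHermite α n z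

section hermiteProj

variable {α : ℝ} {N : ℕ} {g v : ℝ → ℝ}

lemma hermiteProj_mem_hermiteSpan (α : ℝ) (N : ℕ) (g : ℝ → ℝ) :
    hermiteProj α N g ∈ hermiteSpan α N :=
  sum_mem_hermiteSpan α N _

lemma integral_hermiteProj_mul_genHermite (hα : 0 < α) {k : ℕ} (hk : k ≤ N) :
    ∫ x, hermiteProj α N g x * genHermite α k x = ∫ x, g x * genHermite α k x := by
  simp only [hermiteProj, Finset.sum_mul, mul_assoc]
  rw [integral_finsetSum _ fun n _ => (integrable_mul_of_mem_hermiteSpan hα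
    (genHermite_mem_hermiteSpan le_rfl) (genHermite_mem_hermiteSpan le_rfl)).const_mul _]
  simp only [integral_const_mul, integral_genHermite_mul hα, mul_ite, mul_one, mul_zero,
    Finset.sum_ite_eq', Finset.mem_range, Nat.lt_succ_iff.2 hk, if_true]

lemma integral_hermiteProj_mul (hα : 0 < α)
    (hg : ∀ n, Integrable fun x => g x * genHermite α n x) (hv : v ∈ hermiteSpan α N) :
    ∫ x, hermiteProj α N g x * v x = ∫ x, g x * v x := by
  suffices (Integrable fun x => g x * v x) ∧ ∫ x, hermiteProj α N g x * v x = ∫ x, g x * v x from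
    this.2
  have hPv : ∀ {w}, w ∈ hermiteSpan α N → Integrable fun x => hermiteProj α N g x * w x :=
    integrable_mul_of_mem_hermiteSpan hα (hermiteProj_mem_hermiteSpan α N g)
  induction hv using Submodule.span_induction with
  | mem _ h =>
    obtain ⟨k, hk, rfl⟩ := h
    exact ⟨hg k, integral_hermiteProj_mul_genHermite hα hk⟩
  | zero => simp
  | add v w hvR hwR hv hw =>
    refine ⟨by simpa only [Pi.add_apply, mul_add] using hv.1.fun_add hw.1, ?_⟩
    simp only [Pi.add_apply, mul_add]
    rw [integral_add (hPv hvR) (hPv hwR), integral_add hv.1 hw.1, hv.2, hw.2]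
  | smul a v _ hv =>
    refine ⟨by simpa only [Pi.smul_apply, smul_eq_mul, mul_left_comm] using hv.1.const_mul a, ?_⟩
    simp only [Pi.smul_apply, smul_eq_mul, mul_left_comm _ a, integral_const_mul, hv.2]

end hermiteProj

lemma integrable_comp_mul_of_bound {β : Type*} [MeasurableSpace β] {μ : Measure β}
    {f : ℝ → ℝ} {u v : β → ℝ} {C : ℝ} (hf : Continuous f) (hu : AEStronglyMeasurable u μ)
    (hub : ∀ x, |u x| ≤ C) (hv : Integrable v μ) : Integrable (fun x => f (u x) * v x) μ := by
  obtain ⟨D, hD⟩ := isCompact_Icc.exists_bound_of_continuousOn (s := Set.Icc (-C) C)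
    hf.continuousOn
  exact hv.bdd_mul (hf.comp_aestronglyMeasurable hu)
    (ae_of_all _ fun x => hD _ (abs_le.1 (hub x)))

lemma integral_deriv_comp_mul_mul_deriv {f u : ℝ → ℝ} {C : ℝ} (hf : ContDiff ℝ 1 f)
    (hu : Differentiable ℝ u) (hub : ∀ x, |u x| ≤ C) (hu_int : Integrable u)
    (hu'_int : Integrable (deriv u)) :
    ∫ x, deriv f (u x) * u x * deriv u x = -∫ x, f (u x) * deriv u x := by
  have hum : AEStronglyMeasurable u := hu.continuous.aestronglyMeasurable
  have hu'u : Integrable fun x => deriv u x * u x :=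
    hu'_int.mul_bdd hum (ae_of_all _ hub)
  have hfu : ∀ x, HasDerivAt (fun y => f (u y)) (deriv f (u x) * deriv u x) x := fun x =>
    ((hf.differentiable one_ne_zero (u x)).hasDerivAt).comp x (hu x).hasDerivAt
  rw [integral_mul_deriv_eq_deriv_mul_of_integrable (fun x _ => hfu x)
    (fun x _ => (hu x).hasDerivAt)
    (integrable_comp_mul_of_bound hf.continuous hum hub hu'_int)
    (by simpa only [mul_assoc] using
      integrable_comp_mul_of_bound (hf.continuous_deriv le_rfl) hum hub hu'u :
      Integrable fun x => deriv f (u x) * deriv u x * u x)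
    (integrable_comp_mul_of_bound hf.continuous hum hub hu_int), neg_neg]
  congr 1 with x
  ring

theorem flux_truncation_general (α : ℝ) (hα : 0 < α) (N : ℕ) (f : ℝ → ℝ)
    (hf : ContDiff ℝ 1 f) (c : ℕ → ℝ) (u : ℝ → ℝ)
    (hu : u = fun x => ∑ k ∈ Finset.range (N + 1), c k * genHermite α k x) :
    ∫ x : ℝ, deriv (fun z => ∑ n ∈ Finset.range (N + 2),
        (∫ y : ℝ, f (u y) * genHermite α n y) * genHermite α n z) x * u x
      = ∫ x : ℝ, deriv f (u x) * u x * deriv u x := by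
  have huR : u ∈ hermiteSpan α N := hu ▸ sum_mem_hermiteSpan α N c
  have hu'R : deriv u ∈ hermiteSpan α (N + 1) := deriv_mem_hermiteSpan huR
  obtain ⟨C, hC⟩ := exists_bound_of_mem_hermiteSpan hα huR
  have hum : AEStronglyMeasurable u := (continuous_of_mem_hermiteSpan huR).aestronglyMeasurable
  have hfu : ∀ n, Integrable fun x => f (u x) * genHermite α n x := fun n =>
    integrable_comp_mul_of_bound hf.continuous hum hC
      (integrable_of_mem_hermiteSpan hα (genHermite_mem_hermiteSpan (le_refl n)))
  calc _ = ∫ x, deriv (hermiteProj α (N + 1) fun y => f (u y)) x * u x := rfl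
    _ = -∫ x, hermiteProj α (N + 1) (fun y => f (u y)) x * deriv u x :=
      integral_deriv_mul_eq_neg_integral_mul_deriv hα (hermiteProj_mem_hermiteSpan _ _ _) huR
    _ = -∫ x, f (u x) * deriv u x := by rw [integral_hermiteProj_mul hα hfu hu'R]
    _ = ∫ x, deriv f (u x) * u x * deriv u x :=
      (integral_deriv_comp_mul_mul_deriv hf (differentiable_of_mem_hermiteSpan huR) hC
        (integrable_of_mem_hermiteSpan hα huR) (integrable_of_mem_hermiteSpan hα hu'R)).symm

/-- for `u ∈ R_N` and `f ∈ C¹(ℝ)` with `f(0) = 0`, the truncated flux term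
satisfies `∫ ∂_x(P_{N+1}(f∘u)) u dx = ∫ f'(u) u u' dx`. -/
theorem flux_truncation (α : ℝ) (hα : 0 < α) (N : ℕ) (f : ℝ → ℝ)
    (hf : ContDiff ℝ 1 f) (hf0 : f 0 = 0) (c : ℕ → ℝ) (u : ℝ → ℝ)
    (hu : u = fun x => ∑ k ∈ Finset.range (N + 1), c k * genHermite α k x) :
    ∫ x : ℝ, deriv (fun z => ∑ n ∈ Finset.range (N + 2),
        (∫ y : ℝ, f (u y) * genHermite α n y) * genHermite α n z) x * u x
      = ∫ x : ℝ, deriv f (u x) * u x * deriv u x :=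
  flux_truncation_general α hα N f hf c u hu
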